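/- arXiv:2110.11763 — 9 statements merged into one kernel-verified Lean document; each statement's English description precedes it below -/
import Mathlib

section
/- Let ℓ be the interior-design game and let a^1,…,a^T ∈ 𝒜 be any sequence of action profiles. Then for every player i, the best-in-hindsight regret under ℓ equals exactly R_i^T = (1 − 1/M)·ρ·(T − N_i^T), where N_i^T = #{t ≤ T : a^t_i = a†_i}; in particular the minimum over b ∈ 𝒜_i of Σ_{t=1}^T ℓ_i(b, a^t_{−i}) is attained at b = a†_i. -/
open Finset

/-- In the interior-design game, the best-in-hindsight minimum is attained at the
target action, and player `i`'s best-in-hindsight regret equals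
`(1 - 1/M) * ρ * (T - N_i^T)` where `N_i^T` counts the rounds in which player
`i` played the target action. -/
theorem interior_design_regret_eq
    {M : ℕ} (hM : 2 ≤ M)
    {A : Fin M → Type} [∀ i, Fintype (A i)] [∀ i, Nonempty (A i)]
    [∀ i, DecidableEq (A i)]
    (L U : ℝ) (hLU : L < U)
    (adag : ∀ i, A i)
    (ρ : ℝ) (hρ0 : 0 < ρ) (hρU : ρ ≤ (U - L) / 2)
    (ℓo : (∀ i, A i) → Fin M → ℝ)
    (hℓo : ∀ i, ℓo adag i ∈ Set.Icc (L + ρ) (U - ρ))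
    (ℓ : (∀ i, A i) → Fin M → ℝ)
    (hℓ : ∀ a i, ℓ a i =
      if a i = adag i
      then ℓo adag i - (1 - ((univ.filter fun j => a j = adag j).card : ℝ) / M) * ρ
      else ℓo adag i + (((univ.filter fun j => a j = adag j).card : ℝ) / M) * ρ)
    (T : ℕ) (hT : 1 ≤ T) (ap : Fin T → ∀ j, A j) (i : Fin M) :
    (∑ t, ℓ (Function.update (ap t) i (adag i)) i
        = univ.inf' univ_nonempty (fun b : A i => ∑ t, ℓ (Function.update (ap t) i b) i))
    ∧ (∑ t, ℓ (ap t) i)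
        - univ.inf' univ_nonempty (fun b : A i => ∑ t, ℓ (Function.update (ap t) i b) i)
      = (1 - 1 / (M : ℝ)) * ρ
          * ((T : ℝ) - ((univ.filter fun t : Fin T => ap t i = adag i).card : ℝ)) := by
  classical
  have hM0 : (0:ℝ) < M := by
    have : (2:ℝ) ≤ M := by exact_mod_cast hM
    linarith
  set c' : ℝ := (1 - 1/(M:ℝ)) * ρ with hc'
  have hc'0 : 0 ≤ c' := by
    have h1 : (1:ℝ)/M ≤ 1 := by
      rw [div_le_one hM0]
      have : (2:ℝ) ≤ M := by exact_mod_cast hM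
      linarith
    have : 0 ≤ 1 - 1/(M:ℝ) := by linarith
    exact mul_nonneg this hρ0.le
  -- cardinality of the agreement set after an update
  have hcard : ∀ (a : ∀ j, A j) (b : A i),
      ((univ.filter fun j => Function.update a i b j = adag j).card : ℝ)
      = ((univ.filter fun j => j ≠ i ∧ a j = adag j).card : ℝ)
        + (if b = adag i then 1 else 0) := by
    intro a b
    have hset : (univ.filter fun j => Function.update a i b j = adag j)
        = (univ.filter fun j => j ≠ i ∧ a j = adag j)
          ∪ (if b = adag i then {i} else ∅) := by
      ext j
      by_cases hj : j = i
      · subst hj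
        simp only [mem_filter, mem_union, mem_univ, true_and, Function.update_self]
        split_ifs with hb <;> simp [hb]
      · simp only [mem_filter, mem_union, mem_univ, true_and,
          Function.update_of_ne hj, hj, ne_eq, not_false_eq_true]
        split_ifs <;> simp [hj]
    have hdisj : Disjoint (univ.filter fun j => j ≠ i ∧ a j = adag j)
        (if b = adag i then ({i} : Finset (Fin M)) else ∅) := by
      split_ifs
      · simp only [disjoint_singleton_right, mem_filter]
        tauto
      · exact disjoint_empty_right _
    rw [hset, card_union_of_disjoint hdisj]
    split_ifs <;> simp
  -- key pointwise identity
  have key : ∀ (a : ∀ j, A j) (b : A i),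
      ℓ (Function.update a i b) i
      = ℓ (Function.update a i (adag i)) i + (if b = adag i then 0 else c') := by
    intro a b
    rw [hℓ, hℓ]
    have h1 := hcard a b
    have h2 := hcard a (adag i)
    rw [if_pos rfl] at h2
    by_cases hb : b = adag i
    · simp [hb]
    · rw [if_neg (by simpa [Function.update_self] using hb),
        if_pos (by simp [Function.update_self]), if_neg hb, h1, if_neg hb, h2]
      have hMne : (M:ℝ) ≠ 0 := hM0.ne'
      have hx : (M:ℝ) * ρ * (M:ℝ)⁻¹ = ρ := by
        field_simp
      rw [hc']
      field_simp
      ring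
  set Sd : ℝ := ∑ t, ℓ (Function.update (ap t) i (adag i)) i with hSd
  have hSb : ∀ b : A i, (∑ t, ℓ (Function.update (ap t) i b) i)
      = Sd + (T:ℝ) * (if b = adag i then 0 else c') := by
    intro b
    rw [Finset.sum_congr rfl (fun t _ => key (ap t) b), Finset.sum_add_distrib,
      Finset.sum_const, card_univ, Fintype.card_fin, nsmul_eq_mul, hSd]
  have hinf : (univ.inf' univ_nonempty
      (fun b : A i => ∑ t, ℓ (Function.update (ap t) i b) i)) = Sd := by
    apply le_antisymm
    · have h := Finset.inf'_le
        (fun b : A i => ∑ t, ℓ (Function.update (ap t) i b) i)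
        (Finset.mem_univ (adag i))
      rw [hSb (adag i), if_pos rfl, mul_zero, add_zero] at h
      exact h
    · apply Finset.le_inf'
      intro b _
      rw [hSb]
      have : 0 ≤ (T:ℝ) * (if b = adag i then 0 else c') := by
        split_ifs
        · simp
        · exact mul_nonneg (by positivity) hc'0
      linarith
  refine ⟨hinf.symm, ?_⟩
  rw [hinf]
  have hap : ∀ t, ℓ (ap t) i = ℓ (Function.update (ap t) i (adag i)) i
      + (if ap t i = adag i then 0 else c') := by
    intro t
    have := key (ap t) (ap t i)
    rwa [Function.update_eq_self] at this
  have hsum : (∑ t, ℓ (ap t) i)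
      = Sd + ∑ t, (if ap t i = adag i then (0:ℝ) else c') := by
    rw [Finset.sum_congr rfl (fun t _ => hap t), Finset.sum_add_distrib]
  have hcnt : (∑ t, (if ap t i = adag i then (0:ℝ) else c'))
      = c' * ((T:ℝ) - ((univ.filter fun t : Fin T => ap t i = adag i).card : ℝ)) := by
    rw [Finset.sum_ite]
    simp only [Finset.sum_const, Finset.sum_const_zero, nsmul_eq_mul, zero_add]
    have hc := Finset.card_filter_add_card_filter_not
      (s := (univ : Finset (Fin T))) (p := fun t => ap t i = adag i)
    rw [card_univ, Fintype.card_fin] at hc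
    have : ((univ.filter fun t : Fin T => ¬ ap t i = adag i).card : ℝ)
        = (T:ℝ) - ((univ.filter fun t : Fin T => ap t i = adag i).card : ℝ) := by
      have := hc
      push_cast [← this]
      ring
    rw [this]
    ring
  rw [hsum, hcnt, hc']
  ring
end

section
/- (Theorem 1, count bound.) Let ℓ be the interior-design game, let (Ω, ℱ, ℙ) be a probability space, and let a^1,…,a^T : Ω → 𝒜 be random action profiles. Suppose the expected best-in-hindsight regret of every player i under ℓ satisfies E[R_i^T] ≤ R̄ for some real R̄ ≥ 0. Then the expected number of rounds in which the target profile is played satisfies T − E[N^T] ≤ (M² / ((M−1)·ρ)) · R̄, where N^T = #{t ≤ T : a^t = a†}. -/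
open Finset MeasureTheory

lemma interior_design_integrable_comp_finite {Ω α : Type*} [MeasurableSpace Ω] (P : Measure Ω)
    [IsProbabilityMeasure P] [Fintype α] [Nonempty α] [MeasurableSpace α]
    [MeasurableSingletonClass α]
    {F : Ω → α} (hF : Measurable F) (g : α → ℝ) :
    Integrable (fun ω => g (F ω)) P := by
  refine Integrable.mono' (integrable_const (univ.sup' univ_nonempty fun v => ‖g v‖))
    ((measurable_of_countable g).comp hF).aestronglyMeasurable ?_
  filter_upwards with ω
  exact Finset.le_sup' (fun v => ‖g v‖) (mem_univ (F ω))

/-- Theorem 1, count bound: if every player's expected best-in-hindsight regret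
under the interior-design game is at most `R̄`, then
`T - E[N^T(a†)] ≤ (M² / ((M-1)ρ)) R̄`. -/
theorem interior_design_count_bound
    {M : ℕ} (hM : 2 ≤ M)
    {A : Fin M → Type} [∀ i, Fintype (A i)] [∀ i, Nonempty (A i)]
    [∀ i, DecidableEq (A i)]
    (L U : ℝ) (hLU : L < U)
    (adag : ∀ i, A i)
    (ρ : ℝ) (hρ0 : 0 < ρ) (hρU : ρ ≤ (U - L) / 2)
    (ℓo : (∀ i, A i) → Fin M → ℝ)
    (hℓo : ∀ i, ℓo adag i ∈ Set.Icc (L + ρ) (U - ρ))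
    (ℓ : (∀ i, A i) → Fin M → ℝ)
    (hℓ : ∀ a i, ℓ a i =
      if a i = adag i
      then ℓo adag i - (1 - ((univ.filter fun j => a j = adag j).card : ℝ) / M) * ρ
      else ℓo adag i + (((univ.filter fun j => a j = adag j).card : ℝ) / M) * ρ)
    {Ω : Type} [MeasurableSpace Ω] (P : Measure Ω) [IsProbabilityMeasure P]
    [∀ i, MeasurableSpace (A i)] [∀ i, MeasurableSingletonClass (A i)]
    (T : ℕ) (hT : 1 ≤ T) (ap : Fin T → Ω → ∀ j, A j)
    (hmeas : ∀ t, Measurable (ap t))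
    (R : Fin M → Ω → ℝ)
    (hR : ∀ i ω, R i ω =
      (∑ t, ℓ (ap t ω) i)
        - univ.inf' univ_nonempty
            (fun b : A i => ∑ t, ℓ (Function.update (ap t ω) i b) i))
    (Rbar : ℝ) (hRbar : 0 ≤ Rbar)
    (hreg : ∀ i, ∫ ω, R i ω ∂P ≤ Rbar) :
    (T : ℝ) - ∫ ω, ((univ.filter fun t : Fin T => ap t ω = adag).card : ℝ) ∂P
      ≤ ((M : ℝ) ^ 2 / (((M : ℝ) - 1) * ρ)) * Rbar := by
  have hM1 : (1:ℝ) < (M:ℝ) := by exact_mod_cast lt_of_lt_of_le one_lt_two (by exact_mod_cast hM)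
  have hM0 : (0:ℝ) < (M:ℝ) := lt_trans one_pos hM1
  set c : ℝ := ((M:ℝ) - 1) / M * ρ with hc_def
  have hc0 : 0 < c := mul_pos (div_pos (by linarith) hM0) hρ0
  clear_value c
  -- Step 1: pointwise loss-difference computation
  have hdiff : ∀ (a : ∀ j, A j) (i : Fin M),
      ℓ a i - ℓ (Function.update a i (adag i)) i
        = if a i = adag i then 0 else c := by
    intro a i
    by_cases hai : a i = adag i
    · have : Function.update a i (adag i) = a := by
        rw [← hai]; exact Function.update_eq_self i a
      simp [hai, this]
    · have hfil : (univ.filter fun j => Function.update a i (adag i) j = adag j)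
          = insert i (univ.filter fun j => a j = adag j) := by
        ext j
        by_cases hj : j = i
        · subst hj; simp
        · simp [Function.update_of_ne hj, hj]
      have hnot : i ∉ (univ.filter fun j => a j = adag j) := by simp [hai]
      have hcard : ((univ.filter fun j => Function.update a i (adag i) j = adag j).card : ℝ)
          = ((univ.filter fun j => a j = adag j).card : ℝ) + 1 := by
        rw [hfil, card_insert_of_notMem hnot]; push_cast; ring
      rw [hℓ a i, hℓ (Function.update a i (adag i)) i]
      simp only [hai, if_false, Function.update_self, if_true, hcard]
      rw [hc_def]
      field_simp
      ring
  -- Step 2: pointwise regret lower bound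
  have hpt : ∀ ω, c * ((T:ℝ) - ((univ.filter fun t : Fin T => ap t ω = adag).card : ℝ))
      ≤ ∑ i, R i ω := by
    intro ω
    have h1 : ∀ i, ∑ t, (ℓ (ap t ω) i - ℓ (Function.update (ap t ω) i (adag i)) i)
        ≤ R i ω := by
      intro i
      rw [hR i ω, Finset.sum_sub_distrib]
      have := Finset.inf'_le (fun b : A i => ∑ t, ℓ (Function.update (ap t ω) i b) i)
        (mem_univ (adag i))
      linarith
    have h2 : ∀ t : Fin T, (if ap t ω = adag then (0:ℝ) else c)
        ≤ ∑ i, (if ap t ω i = adag i then (0:ℝ) else c) := by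
      intro t
      by_cases heq : ap t ω = adag
      · simp only [heq, if_true]
        exact Finset.sum_nonneg fun i _ => by positivity
      · have : ∃ i, ap t ω i ≠ adag i := by
          by_contra h
          push_neg at h
          exact heq (funext h)
        obtain ⟨i, hi⟩ := this
        simp only [heq, if_false]
        calc c = (if ap t ω i = adag i then (0:ℝ) else c) := by simp [hi]
          _ ≤ _ := Finset.single_le_sum (f := fun i => if ap t ω i = adag i then (0:ℝ) else c)
              (fun j _ => by positivity) (mem_univ i)
    calc c * ((T:ℝ) - ((univ.filter fun t : Fin T => ap t ω = adag).card : ℝ))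
        = ∑ t : Fin T, (if ap t ω = adag then (0:ℝ) else c) := by
          rw [Finset.sum_ite, Finset.sum_const, Finset.sum_const]
          have : (univ.filter fun t : Fin T => ¬ ap t ω = adag).card
              = T - (univ.filter fun t : Fin T => ap t ω = adag).card := by
            have := Finset.card_filter_add_card_filter_not
              (s := (univ : Finset (Fin T))) (p := fun t => ap t ω = adag)
            simp only [card_univ, Fintype.card_fin] at this
            omega
          rw [this]
          have hle : (univ.filter fun t : Fin T => ap t ω = adag).card ≤ T := by
            simpa using (Finset.card_filter_le univ (fun t : Fin T => ap t ω = adag))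
          simp only [smul_zero, zero_add, nsmul_eq_mul, Nat.cast_sub hle]
          ring
      _ ≤ ∑ t : Fin T, ∑ i, (if ap t ω i = adag i then (0:ℝ) else c) :=
          Finset.sum_le_sum fun t _ => h2 t
      _ = ∑ i, ∑ t : Fin T, (ℓ (ap t ω) i - ℓ (Function.update (ap t ω) i (adag i)) i) := by
          rw [Finset.sum_comm]
          exact Finset.sum_congr rfl fun i _ => Finset.sum_congr rfl fun t _ =>
            (hdiff (ap t ω) i).symm
      _ ≤ ∑ i, R i ω := Finset.sum_le_sum fun i _ => h1 i
  -- Step 3: integrability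
  have hTpos : 0 < T := hT
  haveI : Nonempty (Fin T) := ⟨⟨0, hTpos⟩⟩
  set F : Ω → (Fin T → ∀ j, A j) := fun ω t => ap t ω with hF_def
  have hF : Measurable F := measurable_pi_lambda _ fun t => hmeas t
  have hRint : ∀ i, Integrable (R i) P := by
    intro i
    have : R i = fun ω =>
        (fun x : Fin T → ∀ j, A j =>
          (∑ t, ℓ (x t) i)
            - univ.inf' univ_nonempty
                (fun b : A i => ∑ t, ℓ (Function.update (x t) i b) i)) (F ω) := by
      funext ω; rw [hR i ω]
    rw [this]
    exact interior_design_integrable_comp_finite P hF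
      (fun x : Fin T → ∀ j, A j =>
        (∑ t, ℓ (x t) i)
          - univ.inf' univ_nonempty
              (fun b : A i => ∑ t, ℓ (Function.update (x t) i b) i))
  have hNint : Integrable
      (fun ω => ((univ.filter fun t : Fin T => ap t ω = adag).card : ℝ)) P := by
    have : (fun ω => ((univ.filter fun t : Fin T => ap t ω = adag).card : ℝ))
        = fun ω => (fun x : Fin T → ∀ j, A j =>
            ((univ.filter fun t : Fin T => x t = adag).card : ℝ)) (F ω) := rfl
    rw [this]
    exact interior_design_integrable_comp_finite P hF
      (fun x : Fin T → ∀ j, A j => ((univ.filter fun t : Fin T => x t = adag).card : ℝ))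
  -- Step 4: integrate
  have hint : ∫ ω, c * ((T:ℝ) - ((univ.filter fun t : Fin T => ap t ω = adag).card : ℝ)) ∂P
      ≤ ∫ ω, ∑ i, R i ω ∂P := by
    refine integral_mono ?_ (integrable_finset_sum _ fun i _ => hRint i) hpt
    exact ((integrable_const ((T:ℝ))).sub hNint).const_mul c
  rw [integral_finset_sum _ fun i _ => hRint i] at hint
  have hsum : ∑ i, ∫ ω, R i ω ∂P ≤ (M:ℝ) * Rbar := by
    calc ∑ i, ∫ ω, R i ω ∂P ≤ ∑ _i : Fin M, Rbar := Finset.sum_le_sum fun i _ => hreg i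
      _ = (M:ℝ) * Rbar := by simp [mul_comm]
  have hlhs : ∫ ω, c * ((T:ℝ) - ((univ.filter fun t : Fin T => ap t ω = adag).card : ℝ)) ∂P
      = c * ((T:ℝ) - ∫ ω, ((univ.filter fun t : Fin T => ap t ω = adag).card : ℝ) ∂P) := by
    rw [integral_const_mul, integral_sub (integrable_const _) hNint, integral_const]
    simp
  rw [hlhs] at hint
  have hkey : c * ((T:ℝ) - ∫ ω, ((univ.filter fun t : Fin T => ap t ω = adag).card : ℝ) ∂P)
      ≤ (M:ℝ) * Rbar := le_trans hint hsum
  rw [← le_div_iff₀' hc0] at hkey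
  refine le_trans hkey (le_of_eq ?_)
  rw [hc_def]
  field_simp
end

section
/- (Theorem 1, cost bound.) Let ℓ be the interior-design game, assume additionally that ℓ_i^o(a) ∈ [L, U] for every i and every a ∈ 𝒜, and let a^1,…,a^T : Ω → 𝒜 be random action profiles on a probability space (Ω, ℱ, ℙ) such that every player's expected best-in-hindsight regret under ℓ satisfies E[R_i^T] ≤ R̄. Let η > 0, p ≥ 1 be reals and let the per-round design costs c_1,…,c_T be random variables satisfying 0 ≤ c_t ≤ η·‖ℓ^o(a^t) − ℓ(a^t)‖_p for each t, where ‖x‖_p = (Σ_{i=1}^M |x_i|^p)^{1/p}. Then the expected cumulative design cost satisfies E[Σ_{t=1}^T c_t] ≤ η · M^{1/p} · (U−L) · (M² / ((M−1)·ρ)) · R̄. -/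
open Finset MeasureTheory

/-- Theorem 1, cost bound: under the interior-design game, if every player's
expected best-in-hindsight regret is at most `R̄` and the per-round design cost
is at most `η` times the `p`-norm of the loss deviation at the played profile,
then the expected cumulative design cost is at most
`η M^(1/p) (U - L) (M² / ((M-1)ρ)) R̄`. -/
theorem interior_design_cost_bound
    {M : ℕ} (hM : 2 ≤ M)
    {A : Fin M → Type} [∀ i, Fintype (A i)] [∀ i, Nonempty (A i)]
    [∀ i, DecidableEq (A i)]
    (L U : ℝ) (hLU : L < U)
    (adag : ∀ i, A i)
    (ρ : ℝ) (hρ0 : 0 < ρ) (hρU : ρ ≤ (U - L) / 2)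
    (ℓo : (∀ i, A i) → Fin M → ℝ)
    (hℓo : ∀ i, ℓo adag i ∈ Set.Icc (L + ρ) (U - ρ))
    (ℓ : (∀ i, A i) → Fin M → ℝ)
    (hℓ : ∀ a i, ℓ a i =
      if a i = adag i
      then ℓo adag i - (1 - ((univ.filter fun j => a j = adag j).card : ℝ) / M) * ρ
      else ℓo adag i + (((univ.filter fun j => a j = adag j).card : ℝ) / M) * ρ)
    (hrange : ∀ (i : Fin M) (a : ∀ j, A j), ℓo a i ∈ Set.Icc L U)
    {Ω : Type} [MeasurableSpace Ω] (P : Measure Ω) [IsProbabilityMeasure P]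
    [∀ i, MeasurableSpace (A i)] [∀ i, MeasurableSingletonClass (A i)]
    (T : ℕ) (hT : 1 ≤ T) (ap : Fin T → Ω → ∀ j, A j)
    (hmeas : ∀ t, Measurable (ap t))
    (R : Fin M → Ω → ℝ)
    (hR : ∀ i ω, R i ω =
      (∑ t, ℓ (ap t ω) i)
        - univ.inf' univ_nonempty
            (fun b : A i => ∑ t, ℓ (Function.update (ap t ω) i b) i))
    (Rbar : ℝ) (hRbar : 0 ≤ Rbar)
    (hreg : ∀ i, ∫ ω, R i ω ∂P ≤ Rbar)
    (η p : ℝ) (hη : 0 < η) (hp : 1 ≤ p)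
    (cst : Fin T → Ω → ℝ)
    (hcst : ∀ t ω, 0 ≤ cst t ω ∧
      cst t ω ≤ η * (∑ i, |ℓo (ap t ω) i - ℓ (ap t ω) i| ^ p) ^ (1 / p)) :
    ∫ ω, ∑ t, cst t ω ∂P
      ≤ η * (M : ℝ) ^ (1 / p) * (U - L) * ((M : ℝ) ^ 2 / (((M : ℝ) - 1) * ρ)) * Rbar := by
    classical
  -- basic numeric facts
  have hMN : (0:ℕ) < M := by omega
  have hM0 : (0:ℝ) < M := by exact_mod_cast hMN
  have hMne : (M:ℝ) ≠ 0 := ne_of_gt hM0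
  have hM1 : (1:ℝ) ≤ (M:ℝ) - 1 := by
    have : (2:ℝ) ≤ M := by exact_mod_cast hM
    linarith
  have hUL : (0:ℝ) < U - L := sub_pos.2 hLU
  have hp0 : (0:ℝ) < p := lt_of_lt_of_le one_pos hp
  have hpne : p ≠ 0 := ne_of_gt hp0
  have hMp : (0:ℝ) ≤ (M:ℝ) ^ (1/p) := Real.rpow_nonneg (le_of_lt hM0) _
  -- the "count of matches"
  set S : (∀ j, A j) → Finset (Fin M) := fun a => univ.filter fun j => a j = adag j with hS
  have hfrac : ∀ a : ∀ j, A j, 0 ≤ ((S a).card : ℝ) / M ∧ ((S a).card : ℝ) / M ≤ 1 := by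
    intro a
    constructor
    · positivity
    · rw [div_le_one hM0]
      have : (S a).card ≤ M := by
        simpa using (card_filter_le univ fun j => a j = adag j)
      exact_mod_cast this
  -- range of ℓ
  have hℓrange : ∀ (a : ∀ j, A j) i, L ≤ ℓ a i ∧ ℓ a i ≤ U := by
    intro a i
    obtain ⟨h1, h2⟩ := hfrac a
    obtain ⟨ho1, ho2⟩ := hℓo i
    rw [hℓ a i]
    split_ifs with h
    · constructor <;> nlinarith
    · constructor <;> nlinarith
  -- ℓ coincides with ℓo at adag
  have hSdag : S adag = univ := by
    apply filter_true_of_mem; intro j _; rfl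
  have hdag : ∀ i, ℓ adag i = ℓo adag i := by
    intro i
    rw [hℓ adag i, if_pos rfl]
    show ℓo adag i - (1 - ((S adag).card : ℝ) / M) * ρ = ℓo adag i
    rw [hSdag, card_univ, Fintype.card_fin, div_self hMne]
    ring
  -- per-round cost bound
  have hcost : ∀ t ω, cst t ω ≤
      η * (M:ℝ) ^ (1/p) * (U - L) * (if ap t ω = adag then 0 else 1) := by
    intro t ω
    obtain ⟨hc0, hc1⟩ := hcst t ω
    by_cases h : ap t ω = adag
    · rw [if_pos h, mul_zero]
      refine le_trans hc1 ?_
      have : (∑ i, |ℓo (ap t ω) i - ℓ (ap t ω) i| ^ p) = 0 := by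
        apply Finset.sum_eq_zero
        intro i _
        rw [h, hdag i, sub_self, abs_zero, Real.zero_rpow hpne]
      rw [this, Real.zero_rpow (by positivity : 1/p ≠ 0), mul_zero]
    · rw [if_neg h, mul_one]
      refine le_trans hc1 ?_
      have hbound : (∑ i, |ℓo (ap t ω) i - ℓ (ap t ω) i| ^ p)
          ≤ (M:ℝ) * (U - L) ^ p := by
        calc (∑ i, |ℓo (ap t ω) i - ℓ (ap t ω) i| ^ p)
            ≤ ∑ _i : Fin M, (U - L) ^ p := by
              apply Finset.sum_le_sum
              intro i _
              apply Real.rpow_le_rpow (abs_nonneg _) _ (le_of_lt hp0)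
              rw [abs_le]
              obtain ⟨g1, g2⟩ := hℓrange (ap t ω) i
              obtain ⟨f1, f2⟩ := hrange i (ap t ω)
              constructor <;> linarith
          _ = (M:ℝ) * (U - L) ^ p := by
              rw [Finset.sum_const, card_univ, Fintype.card_fin, nsmul_eq_mul]
      have h2 : (∑ i, |ℓo (ap t ω) i - ℓ (ap t ω) i| ^ p) ^ (1/p)
          ≤ ((M:ℝ) * (U - L) ^ p) ^ (1/p) := by
        apply Real.rpow_le_rpow _ hbound (by positivity)
        apply Finset.sum_nonneg
        intro i _
        exact Real.rpow_nonneg (abs_nonneg _) _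
      have h3 : ((M:ℝ) * (U - L) ^ p) ^ (1/p) = (M:ℝ) ^ (1/p) * (U - L) := by
        rw [Real.mul_rpow (le_of_lt hM0) (Real.rpow_nonneg (le_of_lt hUL) _),
          ← Real.rpow_mul (le_of_lt hUL), mul_one_div_cancel hpne, Real.rpow_one]
      calc η * (∑ i, |ℓo (ap t ω) i - ℓ (ap t ω) i| ^ p) ^ (1/p)
          ≤ η * ((M:ℝ) ^ (1/p) * (U - L)) := by
            rw [h3] at h2
            exact mul_le_mul_of_nonneg_left h2 (le_of_lt hη)
        _ = η * (M:ℝ) ^ (1/p) * (U - L) := by ring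
  -- the gain from deviating to adag i
  have hgain : ∀ (a : ∀ j, A j) i, a i ≠ adag i →
      ℓ a i - ℓ (Function.update a i (adag i)) i = ρ * ((M:ℝ) - 1) / M := by
    intro a i hi
    have hupd_i : Function.update a i (adag i) i = adag i := Function.update_self i _ a
    have hScard : ((S (Function.update a i (adag i))).card : ℝ) = (S a).card + 1 := by
      have hiS : i ∉ S a := by simp [hS, hi]
      have hins : S (Function.update a i (adag i)) = insert i (S a) := by
        ext j
        by_cases hj : j = i
        · subst hj
          simp [hS, Function.update_self]
        · simp [hS, Function.update_of_ne hj, hj]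
      rw [hins, card_insert_of_notMem hiS]
      push_cast
      ring
    rw [hℓ a i, if_neg hi, hℓ (Function.update a i (adag i)) i, if_pos hupd_i, hScard]
    field_simp
    ring
  -- zero gain when already at adag i
  have hgain0 : ∀ (a : ∀ j, A j) i, a i = adag i →
      ℓ a i - ℓ (Function.update a i (adag i)) i = 0 := by
    intro a i hi
    rw [← hi, Function.update_eq_self, sub_self]
  -- regret lower bound per player
  have hRlow : ∀ i ω,
      (∑ t, (ℓ (ap t ω) i - ℓ (Function.update (ap t ω) i (adag i)) i)) ≤ R i ω := by
    intro i ω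
    rw [hR i ω, Finset.sum_sub_distrib]
    have := Finset.inf'_le (fun b : A i => ∑ t, ℓ (Function.update (ap t ω) i b) i)
      (Finset.mem_univ (adag i))
    linarith
  -- indicator bound per round
  have hind : ∀ (a : ∀ j, A j),
      (if a = adag then (0:ℝ) else 1) * (ρ * ((M:ℝ) - 1) / M)
        ≤ ∑ i, (ℓ a i - ℓ (Function.update a i (adag i)) i) := by
    intro a
    have hnn : ∀ i ∈ univ, (0:ℝ) ≤ ℓ a i - ℓ (Function.update a i (adag i)) i := by
      intro i _
      by_cases hi : a i = adag i
      · rw [hgain0 a i hi]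
      · rw [hgain a i hi]
        positivity
    by_cases h : a = adag
    · rw [if_pos h, zero_mul]
      exact Finset.sum_nonneg hnn
    · rw [if_neg h, one_mul]
      obtain ⟨i0, hi0⟩ : ∃ i0, a i0 ≠ adag i0 := by
        by_contra hcon
        push_neg at hcon
        exact h (funext hcon)
      calc ρ * ((M:ℝ) - 1) / M
          = ℓ a i0 - ℓ (Function.update a i0 (adag i0)) i0 := (hgain a i0 hi0).symm
        _ ≤ ∑ i, (ℓ a i - ℓ (Function.update a i (adag i)) i) :=
            Finset.single_le_sum hnn (Finset.mem_univ i0)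
  -- pointwise bound of total cost by total regret
  set K : ℝ := η * (M:ℝ) ^ (1/p) * (U - L) * ((M:ℝ) / (((M:ℝ) - 1) * ρ)) with hK
  have hK0 : 0 ≤ K := by
    apply mul_nonneg
    apply mul_nonneg
    apply mul_nonneg (le_of_lt hη) hMp
    · exact le_of_lt hUL
    · positivity
  have hpt : ∀ ω, ∑ t, cst t ω ≤ K * ∑ i, R i ω := by
    intro ω
    have hden : (0:ℝ) < ρ * ((M:ℝ) - 1) / M := by positivity
    have step1 : ∑ t, cst t ω ≤
        η * (M:ℝ) ^ (1/p) * (U - L) * ∑ t, (if ap t ω = adag then (0:ℝ) else 1) := by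
      rw [Finset.mul_sum]
      exact Finset.sum_le_sum fun t _ => hcost t ω
    have step2 : (∑ t, (if ap t ω = adag then (0:ℝ) else 1)) * (ρ * ((M:ℝ) - 1) / M)
        ≤ ∑ i, R i ω := by
      calc (∑ t, (if ap t ω = adag then (0:ℝ) else 1)) * (ρ * ((M:ℝ) - 1) / M)
          = ∑ t, (if ap t ω = adag then (0:ℝ) else 1) * (ρ * ((M:ℝ) - 1) / M) := by
            rw [Finset.sum_mul]
        _ ≤ ∑ t, ∑ i, (ℓ (ap t ω) i - ℓ (Function.update (ap t ω) i (adag i)) i) :=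
            Finset.sum_le_sum fun t _ => hind (ap t ω)
        _ = ∑ i, ∑ t, (ℓ (ap t ω) i - ℓ (Function.update (ap t ω) i (adag i)) i) :=
            Finset.sum_comm
        _ ≤ ∑ i, R i ω := Finset.sum_le_sum fun i _ => hRlow i ω
    have step3 : (∑ t, (if ap t ω = adag then (0:ℝ) else 1))
        ≤ (∑ i, R i ω) * ((M:ℝ) / (((M:ℝ) - 1) * ρ)) := by
      rw [← le_div_iff₀ hden] at step2
      calc (∑ t, (if ap t ω = adag then (0:ℝ) else 1))
          ≤ (∑ i, R i ω) / (ρ * ((M:ℝ) - 1) / M) := step2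
        _ = (∑ i, R i ω) * ((M:ℝ) / (((M:ℝ) - 1) * ρ)) := by
            have hρne : ρ ≠ 0 := ne_of_gt hρ0
            have hM1ne : (M:ℝ) - 1 ≠ 0 := by linarith
            rw [div_eq_mul_inv, inv_div, mul_comm ρ]
    calc ∑ t, cst t ω
        ≤ η * (M:ℝ) ^ (1/p) * (U - L) * ∑ t, (if ap t ω = adag then (0:ℝ) else 1) := step1
      _ ≤ η * (M:ℝ) ^ (1/p) * (U - L) *
            ((∑ i, R i ω) * ((M:ℝ) / (((M:ℝ) - 1) * ρ))) := by
          apply mul_le_mul_of_nonneg_left step3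
          apply mul_nonneg (mul_nonneg (le_of_lt hη) hMp) (le_of_lt hUL)
      _ = K * ∑ i, R i ω := by rw [hK]; ring
  -- measurability and integrability of R i
  have hRmeas : ∀ i, Measurable (R i) := by
    intro i
    have hfun : R i = (fun v : Fin T → ∀ j, A j =>
        (∑ t, ℓ (v t) i)
          - univ.inf' univ_nonempty
              (fun b : A i => ∑ t, ℓ (Function.update (v t) i b) i))
        ∘ (fun ω t => ap t ω) := by
      funext ω
      exact hR i ω
    rw [hfun]
    exact (measurable_of_countable _).comp (measurable_pi_lambda _ fun t => hmeas t)
  have hRbd : ∀ i ω, ‖R i ω‖ ≤ (T:ℝ) * (U - L) := by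
    intro i ω
    rw [hR i ω, Real.norm_eq_abs, abs_le]
    have hsum_le : ∀ (f : Fin T → ∀ j, A j), (∑ t, ℓ (f t) i) ≤ (T:ℝ) * U := by
      intro f
      calc (∑ t, ℓ (f t) i) ≤ ∑ _t : Fin T, U :=
            Finset.sum_le_sum fun t _ => (hℓrange (f t) i).2
        _ = (T:ℝ) * U := by rw [Finset.sum_const, card_univ, Fintype.card_fin, nsmul_eq_mul]
    have hsum_ge : ∀ (f : Fin T → ∀ j, A j), (T:ℝ) * L ≤ (∑ t, ℓ (f t) i) := by
      intro f
      calc (T:ℝ) * L = ∑ _t : Fin T, L := by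
            rw [Finset.sum_const, card_univ, Fintype.card_fin, nsmul_eq_mul]
        _ ≤ ∑ t, ℓ (f t) i := Finset.sum_le_sum fun t _ => (hℓrange (f t) i).1
    have hinf_ge : (T:ℝ) * L ≤ univ.inf' univ_nonempty
        (fun b : A i => ∑ t, ℓ (Function.update (ap t ω) i b) i) := by
      apply Finset.le_inf'
      intro b _
      exact hsum_ge _
    have hinf_le : univ.inf' univ_nonempty
        (fun b : A i => ∑ t, ℓ (Function.update (ap t ω) i b) i) ≤ (T:ℝ) * U := by
      refine le_trans (Finset.inf'_le _ (Finset.mem_univ (Classical.arbitrary (A i)))) ?_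
      exact hsum_le _
    constructor <;> [skip; skip]
    · have := hsum_ge (fun t => ap t ω)
      linarith
    · have := hsum_le (fun t => ap t ω)
      linarith
  have hRint : ∀ i, Integrable (R i) P := by
    intro i
    exact (integrable_const ((T:ℝ) * (U - L))).mono'
      (hRmeas i).aestronglyMeasurable (ae_of_all _ (hRbd i))
  -- main chain
  have hgint : Integrable (fun ω => K * ∑ i, R i ω) P := by
    exact (integrable_finset_sum univ fun i _ => hRint i).const_mul K
  calc ∫ ω, ∑ t, cst t ω ∂P
      ≤ ∫ ω, K * ∑ i, R i ω ∂P := by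
        apply integral_mono_of_nonneg
        · exact ae_of_all _ fun ω => Finset.sum_nonneg fun t _ => (hcst t ω).1
        · exact hgint
        · exact ae_of_all _ hpt
    _ = K * ∑ i, ∫ ω, R i ω ∂P := by
        rw [integral_const_mul, integral_finset_sum univ fun i _ => hRint i]
    _ ≤ K * ((M:ℝ) * Rbar) := by
        apply mul_le_mul_of_nonneg_left _ hK0
        calc (∑ i, ∫ ω, R i ω ∂P) ≤ ∑ _i : Fin M, Rbar :=
              Finset.sum_le_sum fun i _ => hreg i
          _ = (M:ℝ) * Rbar := by
              rw [Finset.sum_const, card_univ, Fintype.card_fin, nsmul_eq_mul]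
    _ = η * (M:ℝ) ^ (1/p) * (U - L) * ((M:ℝ) ^ 2 / (((M:ℝ) - 1) * ρ)) * Rbar := by
        rw [hK]
        have h1 : ((M:ℝ) - 1) ≠ 0 := by linarith
        field_simp
end

section
/- (Corollary on averaged policies.) Let ℓ be the interior-design game, let a^1,…,a^T : Ω → 𝒜 be random action profiles on a probability space (Ω, ℱ, ℙ), and fix a player i. Suppose there are random variables π_i^1,…,π_i^T : Ω → [0,1] (the probability player i's policy at round t assigns to the target action a†_i) such that E[π_i^t] = ℙ(a^t_i = a†_i) for every t, and suppose E[R_i^T] ≤ R̄ for the best-in-hindsight regret under ℓ. Then the expected averaged policy probability of the target action satisfies 1 − E[(1/T)·Σ_{t=1}^T π_i^t] ≤ (M · R̄) / ((M−1) · ρ · T); in particular, if R̄ = c·T^α with α < 1, this quantity converges to 1 as T → ∞. -/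
open Finset MeasureTheory

/-!
In a round where player `i` is off target, switching to `a†_i` raises `d` by one and lowers
`i`'s loss by exactly `(M - 1) ρ / M`; in an on-target round the switch changes nothing. Comparing
with the constant action `a†_i`, the regret is therefore at least `(M - 1) ρ / M` times the number
of off-target rounds, whose expectation is `∑ₜ (1 - ℙ(aₜᵢ = a†ᵢ)) = T - E[∑ₜ πₜ]`.
-/

theorem Finset.card_filter_update_eq_add_one {ι : Type*} [Fintype ι] [DecidableEq ι]
    {β : ι → Type*} [∀ i, DecidableEq (β i)] {a b : ∀ i, β i} {i : ι} (h : a i ≠ b i) :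
    #{j | Function.update a i (b i) j = b j} = #{j | a j = b j} + 1 := by
  have hfilter : univ.filter (fun j => Function.update a i (b i) j = b j)
      = insert i (univ.filter fun j => a j = b j) := by
    ext j
    by_cases hj : j = i
    · subst hj; simp
    · simp [hj]
  rw [hfilter, card_insert_of_notMem (by simp [h])]

section Regret

variable {ι τ : Type*} [DecidableEq ι] [Fintype τ] {A : ι → Type*} [∀ i, Fintype (A i)]
  [∀ i, Nonempty (A i)]

def bestInHindsightRegret (ℓ : (∀ j, A j) → ι → ℝ) (i : ι) (a : τ → ∀ j, A j) : ℝ :=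
  (∑ t, ℓ (a t) i)
    - univ.inf' univ_nonempty fun b : A i => (∑ t, ℓ (Function.update (a t) i b) i : ℝ)

theorem sum_sub_update_le_bestInHindsightRegret (ℓ : (∀ j, A j) → ι → ℝ) (i : ι)
    (a : τ → ∀ j, A j) (b : A i) :
    ∑ t, (ℓ (a t) i - ℓ (Function.update (a t) i b) i) ≤ bestInHindsightRegret ℓ i a := by
  rw [bestInHindsightRegret, sum_sub_distrib]
  gcongr
  exact inf'_le _ (mem_univ b)

end Regret

section InteriorDesign

variable {M : ℕ} {A : Fin M → Type*} [∀ i, DecidableEq (A i)]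

def IsInteriorDesignLoss (adag : ∀ i, A i) (ρ : ℝ) (ℓo ℓ : (∀ i, A i) → Fin M → ℝ) : Prop :=
  ∀ a i, ℓ a i =
    if a i = adag i
    then ℓo adag i - (1 - ((univ.filter fun j => a j = adag j).card : ℝ) / M) * ρ
    else ℓo adag i + (((univ.filter fun j => a j = adag j).card : ℝ) / M) * ρ

variable {adag : ∀ i, A i} {ρ : ℝ} {ℓo ℓ : (∀ i, A i) → Fin M → ℝ}

theorem IsInteriorDesignLoss.sub_update_target (hℓ : IsInteriorDesignLoss adag ρ ℓo ℓ)
    (a : ∀ i, A i) (i : Fin M) :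
    ℓ a i - ℓ (Function.update a i (adag i)) i
      = ((M : ℝ) - 1) / M * ρ * if a i = adag i then 0 else 1 := by
  by_cases h : a i = adag i
  · rw [← h, Function.update_eq_self, sub_self, if_pos rfl, mul_zero]
  · have hM : (M : ℝ) ≠ 0 := Nat.cast_ne_zero.2 i.pos.ne'
    rw [hℓ a, hℓ (Function.update a i (adag i)), if_neg h, Function.update_self, if_pos rfl,
      card_filter_update_eq_add_one h, if_neg h]
    push_cast
    field_simp
    ring

theorem IsInteriorDesignLoss.card_off_target_le_bestInHindsightRegret [∀ i, Fintype (A i)]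
    [∀ i, Nonempty (A i)] (hℓ : IsInteriorDesignLoss adag ρ ℓo ℓ) {τ : Type*} [Fintype τ]
    (i : Fin M) (a : τ → ∀ j, A j) :
    ((M : ℝ) - 1) / M * ρ * #{t | a t i ≠ adag i} ≤ bestInHindsightRegret ℓ i a :=
  calc ((M : ℝ) - 1) / M * ρ * #{t | a t i ≠ adag i}
      = ∑ t, (ℓ (a t) i - ℓ (Function.update (a t) i (adag i)) i) := by
        simp only [hℓ.sub_update_target, ← mul_sum, natCast_card_filter, ite_not]
    _ ≤ bestInHindsightRegret ℓ i a := sum_sub_update_le_bestInHindsightRegret ℓ i a (adag i)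

end InteriorDesign

theorem integral_card_filter_mem {Ω τ : Type*} [MeasurableSpace Ω] {P : Measure Ω}
    [IsFiniteMeasure P] [Fintype τ] {s : τ → Set Ω} (hs : ∀ t, MeasurableSet (s t))
    [∀ t, DecidablePred (· ∈ s t)] :
    ∫ ω, (#{t | ω ∈ s t} : ℝ) ∂P = ∑ t, P.real (s t) := by
  have hind : ∀ ω, (#{t | ω ∈ s t} : ℝ) = ∑ t, (s t).indicator 1 ω := fun ω => by
    simp only [natCast_card_filter, Set.indicator_apply, Pi.one_apply]
  simp_rw [hind]
  rw [integral_finsetSum _ fun t _ => (integrable_const 1).indicator (hs t)]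
  exact sum_congr rfl fun t _ => integral_indicator_one (hs t)

theorem interior_design_average_policy_general
    {M : ℕ} (hM : 2 ≤ M)
    {A : Fin M → Type} [∀ i, Fintype (A i)] [∀ i, Nonempty (A i)]
    [∀ i, DecidableEq (A i)]
    (adag : ∀ i, A i)
    (ρ : ℝ) (hρ0 : 0 < ρ)
    (ℓo : (∀ i, A i) → Fin M → ℝ)
    (ℓ : (∀ i, A i) → Fin M → ℝ)
    (hℓ : ∀ a i, ℓ a i =
      if a i = adag i
      then ℓo adag i - (1 - ((univ.filter fun j => a j = adag j).card : ℝ) / M) * ρ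
      else ℓo adag i + (((univ.filter fun j => a j = adag j).card : ℝ) / M) * ρ)
    {Ω : Type} [MeasurableSpace Ω] (P : Measure Ω) [IsProbabilityMeasure P]
    [∀ i, MeasurableSpace (A i)] [∀ i, MeasurableSingletonClass (A i)]
    (T : ℕ) (hT : 1 ≤ T) (ap : Fin T → Ω → ∀ j, A j)
    (hmeas : ∀ t, Measurable (ap t))
    (i : Fin M)
    (π : Fin T → Ω → ℝ)
    (hπ01 : ∀ t ω, π t ω ∈ Set.Icc (0 : ℝ) 1)
    (hπmeas : ∀ t, Measurable (π t))
    (hπ : ∀ t, ∫ ω, π t ω ∂P = (P {ω | ap t ω i = adag i}).toReal)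
    (R : Ω → ℝ)
    (hR : ∀ ω, R ω =
      (∑ t, ℓ (ap t ω) i)
        - univ.inf' univ_nonempty
            (fun b : A i => ∑ t, ℓ (Function.update (ap t ω) i b) i))
    (Rbar : ℝ)
    (hreg : ∫ ω, R ω ∂P ≤ Rbar) :
    1 - ∫ ω, (1 / (T : ℝ)) * ∑ t, π t ω ∂P
      ≤ (M : ℝ) * Rbar / (((M : ℝ) - 1) * ρ * T) := by
  have hM1 : (0 : ℝ) < M - 1 := by
    have : (2 : ℝ) ≤ M := by exact_mod_cast hM
    linarith
  have hT0 : (0 : ℝ) < T := by exact_mod_cast hT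
  set onTarget : Fin T → Set Ω := fun t => {ω | ap t ω i = adag i}
  have hOn : ∀ t, MeasurableSet (onTarget t) := fun t =>
    hmeas t (measurable_pi_apply i (measurableSet_singleton (adag i)))
  have hR_eq : R = bestInHindsightRegret ℓ i ∘ fun ω t => ap t ω := funext hR
  have hR_int : Integrable R P :=
    hR_eq ▸ Integrable.of_finite.comp_measurable (measurable_pi_lambda _ hmeas)
  have hOff : ((M : ℝ) - 1) / M * ρ * ∑ t, (1 - P.real (onTarget t)) ≤ Rbar :=
    calc ((M : ℝ) - 1) / M * ρ * ∑ t, (1 - P.real (onTarget t))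
        = ∫ ω, ((M : ℝ) - 1) / M * ρ * #{t | ω ∈ (onTarget t)ᶜ} ∂P := by
          rw [integral_const_mul, integral_card_filter_mem fun t => (hOn t).compl]
          simp only [probReal_compl_eq_one_sub (hOn _)]
      _ ≤ ∫ ω, R ω ∂P := by
          refine integral_mono_of_nonneg (ae_of_all _ fun ω => ?_) hR_int
            (ae_of_all _ fun ω => ?_)
          · have := hM1.le
            positivity
          · rw [hR_eq]
            exact IsInteriorDesignLoss.card_off_target_le_bestInHindsightRegret hℓ i _
      _ ≤ Rbar := hreg
  have hAvg : ∫ ω, (1 / (T : ℝ)) * ∑ t, π t ω ∂P = 1 / T * ∑ t, P.real (onTarget t) := by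
    rw [integral_const_mul, integral_finsetSum _ fun t _ =>
      Integrable.of_mem_Icc 0 1 (hπmeas t).aemeasurable (ae_of_all _ (hπ01 t))]
    simp only [hπ, measureReal_def, onTarget]
  set S := ∑ t, P.real (onTarget t)
  rw [sum_sub_distrib, sum_const, card_univ, Fintype.card_fin, nsmul_one] at hOff
  rw [hAvg, le_div_iff₀ (by positivity)]
  calc (1 - 1 / T * S) * ((M - 1) * ρ * T) = M * ((M - 1) / M * ρ * (T - S)) := by
        field_simp
    _ ≤ M * Rbar := by gcongr

/-- Corollary on averaged policies: under the interior-design game, if player `i`'s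
policies `π_i^t` (probability assigned to the target action) satisfy
`E[π_i^t] = ℙ(a_i^t = a†_i)` and the expected best-in-hindsight regret is at most
`R̄`, then `1 - E[(1/T) Σ_t π_i^t] ≤ M R̄ / ((M-1) ρ T)`. -/
theorem interior_design_average_policy
    {M : ℕ} (hM : 2 ≤ M)
    {A : Fin M → Type} [∀ i, Fintype (A i)] [∀ i, Nonempty (A i)]
    [∀ i, DecidableEq (A i)]
    (L U : ℝ) (hLU : L < U)
    (adag : ∀ i, A i)
    (ρ : ℝ) (hρ0 : 0 < ρ) (hρU : ρ ≤ (U - L) / 2)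
    (ℓo : (∀ i, A i) → Fin M → ℝ)
    (hℓo : ∀ i, ℓo adag i ∈ Set.Icc (L + ρ) (U - ρ))
    (ℓ : (∀ i, A i) → Fin M → ℝ)
    (hℓ : ∀ a i, ℓ a i =
      if a i = adag i
      then ℓo adag i - (1 - ((univ.filter fun j => a j = adag j).card : ℝ) / M) * ρ
      else ℓo adag i + (((univ.filter fun j => a j = adag j).card : ℝ) / M) * ρ)
    {Ω : Type} [MeasurableSpace Ω] (P : Measure Ω) [IsProbabilityMeasure P]
    [∀ i, MeasurableSpace (A i)] [∀ i, MeasurableSingletonClass (A i)]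
    (T : ℕ) (hT : 1 ≤ T) (ap : Fin T → Ω → ∀ j, A j)
    (hmeas : ∀ t, Measurable (ap t))
    (i : Fin M)
    (π : Fin T → Ω → ℝ)
    (hπ01 : ∀ t ω, π t ω ∈ Set.Icc (0 : ℝ) 1)
    (hπmeas : ∀ t, Measurable (π t))
    (hπ : ∀ t, ∫ ω, π t ω ∂P = (P {ω | ap t ω i = adag i}).toReal)
    (R : Ω → ℝ)
    (hR : ∀ ω, R ω =
      (∑ t, ℓ (ap t ω) i)
        - univ.inf' univ_nonempty
            (fun b : A i => ∑ t, ℓ (Function.update (ap t ω) i b) i))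
    (Rbar : ℝ) (hRbar : 0 ≤ Rbar)
    (hreg : ∫ ω, R ω ∂P ≤ Rbar) :
    1 - ∫ ω, (1 / (T : ℝ)) * ∑ t, π t ω ∂P
      ≤ (M : ℝ) * Rbar / (((M : ℝ) - 1) * ρ * T) :=
  interior_design_average_policy_general hM adag ρ hρ0 ℓo ℓ hℓ P T hT ap hmeas i π hπ01 hπmeas hπ R
    hR Rbar hreg
end

section
/- (Lemma 2, property 2.) Let ℓ^t = w_t·ℓ̲ + (1 − w_t)·ℓ̄ be the boundary-design game at round t ≥ 1. Then for every player i, the target action a†_i strictly dominates every other action by exactly (1 − 1/M)·ρ·w_t: for every a_i ∈ 𝒜_i with a_i ≠ a†_i and every choice a_{−i} of actions for the other players, ℓ^t_i(a_i, a_{−i}) = ℓ^t_i(a†_i, a_{−i}) + (1 − 1/M)·ρ·w_t. -/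
open Finset

/-- Lemma 2, property 2: in the boundary-design game at round `t ≥ 1`, the target
action `adag i` strictly dominates every other action by exactly
`(1 - 1/M) * ρ * w_t` with `w_t = t^(c-1)`. -/
theorem boundary_design_strict_dominance
    {M : ℕ} (hM : 2 ≤ M)
    {A : Fin M → Type} [∀ i, Fintype (A i)] [∀ i, Nonempty (A i)]
    [∀ i, DecidableEq (A i)]
    (L U : ℝ) (hLU : L < U)
    (adag : ∀ i, A i)
    (ρ : ℝ) (hρ0 : 0 < ρ) (hρU : ρ ≤ (U - L) / 2)
    (ℓo : (∀ i, A i) → Fin M → ℝ)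
    (hℓo : ∀ i, ℓo adag i ∈ Set.Icc (L + ρ) (U - ρ))
    (v : Fin M → ℝ) (hv : ∀ i, v i ∈ Set.Icc (L + ρ) (U - ρ))
    (ℓund : (∀ i, A i) → Fin M → ℝ)
    (hℓund : ∀ a i, ℓund a i =
      if a i = adag i
      then v i - (1 - ((univ.filter fun j => a j = adag j).card : ℝ) / M) * ρ
      else v i + (((univ.filter fun j => a j = adag j).card : ℝ) / M) * ρ)
    (c : ℝ) (hc : c ∈ Set.Ioc (0 : ℝ) 1)
    (ℓt : ℕ → (∀ i, A i) → Fin M → ℝ)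
    (hℓt : ∀ (t : ℕ) (a : ∀ i, A i) (i : Fin M), ℓt t a i =
      (t : ℝ) ^ (c - 1) * ℓund a i + (1 - (t : ℝ) ^ (c - 1)) * ℓo adag i)
    (t : ℕ) (ht : 1 ≤ t) :
    ∀ (i : Fin M) (ai : A i), ai ≠ adag i → ∀ a : ∀ j, A j,
      ℓt t (Function.update a i ai) i
        = ℓt t (Function.update a i (adag i)) i
            + (1 - 1 / (M : ℝ)) * ρ * (t : ℝ) ^ (c - 1) := by
  intro i ai hai a
  set S1 := univ.filter fun j => Function.update a i ai j = adag j with hS1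
  set S2 := univ.filter fun j => Function.update a i (adag i) j = adag j with hS2
  have hiS1 : i ∉ S1 := by
    simp [hS1, Function.update_self, hai]
  have hS2eq : S2 = insert i S1 := by
    ext j
    by_cases hj : j = i
    · subst hj
      simp [hS2, Function.update_self]
    · simp only [hS1, hS2, mem_filter, mem_univ, true_and, mem_insert,
        Function.update_of_ne hj]
      tauto
  have hcard : (S2.card : ℝ) = (S1.card : ℝ) + 1 := by
    rw [hS2eq, Finset.card_insert_of_notMem hiS1]
    push_cast; ring
  have h1 : ℓund (Function.update a i ai) i = v i + ((S1.card : ℝ) / M) * ρ := by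
    rw [hℓund]
    simp [Function.update_self, hai, hS1]
  have h2 : ℓund (Function.update a i (adag i)) i
      = v i - (1 - ((S1.card : ℝ) + 1) / M) * ρ := by
    rw [hℓund]
    simp only [Function.update_self, if_pos rfl]
    rw [← hS2, hcard]
    simp
  have hMpos : (0 : ℝ) < M := by positivity
  rw [hℓt, hℓt, h1, h2]
  field_simp
  ring
end

section
/- Let c ∈ (0,1] be real, let T ≥ 1 be an integer, let s : {1,…,T} → {0,1}, and set N = #{t ≤ T : s(t) = 0}. Then the weighted sum with decreasing weights w_t = t^{c−1} satisfies Σ_{t=1}^T s(t)·t^{c−1} ≥ T^c − N·T^{c−1} − 1/c. -/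
open Finset

private lemma bern_up {c : ℝ} (hc0 : 0 < c) (hc1 : c ≤ 1) {u : ℝ} (hu : 1 ≤ u) :
    (u + 1) ^ c ≤ u ^ c + c * u ^ (c - 1) := by
  have hu0 : 0 < u := lt_of_lt_of_le zero_lt_one hu
  have h1 : u + 1 = u * (1 + 1 / u) := by field_simp
  have h2 : (1 + 1 / u) ^ c ≤ 1 + c * (1 / u) := by
    refine rpow_one_add_le_one_add_mul_self ?_ hc0.le hc1
    have : (0:ℝ) < 1 / u := by positivity
    linarith
  calc (u + 1) ^ c = u ^ c * (1 + 1 / u) ^ c := by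
        rw [h1, Real.mul_rpow hu0.le (by positivity)]
    _ ≤ u ^ c * (1 + c * (1 / u)) := by
        exact mul_le_mul_of_nonneg_left h2 (Real.rpow_nonneg hu0.le c)
    _ = u ^ c + c * (u ^ c / u) := by ring
    _ = u ^ c + c * u ^ (c - 1) := by
        rw [Real.rpow_sub hu0, Real.rpow_one]

private lemma bern_down {c : ℝ} (hc0 : 0 < c) (hc1 : c ≤ 1) {u : ℝ} (hu : 1 ≤ u) :
    (u - 1) ^ c ≤ u ^ c - c * u ^ (c - 1) := by
  have hu0 : 0 < u := lt_of_lt_of_le zero_lt_one hu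
  have h1 : u - 1 = u * (1 + (-1 / u)) := by field_simp; ring
  have hd1 : 1 / u ≤ 1 := div_le_one_of_le₀ hu hu0.le
  have h2 : (1 + (-1 / u)) ^ c ≤ 1 + c * (-1 / u) := by
    refine rpow_one_add_le_one_add_mul_self ?_ hc0.le hc1
    rw [neg_div]; linarith
  have hnn : (0:ℝ) ≤ 1 + (-1 / u) := by rw [neg_div]; linarith
  calc (u - 1) ^ c = u ^ c * (1 + (-1 / u)) ^ c := by
        rw [h1, Real.mul_rpow hu0.le hnn]
    _ ≤ u ^ c * (1 + c * (-1 / u)) := by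
        exact mul_le_mul_of_nonneg_left h2 (Real.rpow_nonneg hu0.le c)
    _ = u ^ c - c * (u ^ c / u) := by ring
    _ = u ^ c - c * u ^ (c - 1) := by
        rw [Real.rpow_sub hu0, Real.rpow_one]

/-- Lower bound: `c * Σ_{t=1}^T t^(c-1) ≥ (T+1)^c - 1`. -/
private lemma sum_lower {c : ℝ} (hc0 : 0 < c) (hc1 : c ≤ 1) (T : ℕ) :
    ((T : ℝ) + 1) ^ c - 1 ≤ c * ∑ t ∈ Finset.Icc 1 T, (t : ℝ) ^ (c - 1) := by
  induction T with
  | zero => simp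
  | succ T ih =>
      rw [Finset.sum_Icc_succ_top (Nat.le_add_left 1 T)]
      have hb := bern_up hc0 hc1 (u := (T : ℝ) + 1)
        (le_add_of_nonneg_left (Nat.cast_nonneg T))
      push_cast
      push_cast at ih hb
      nlinarith [hb, ih]

/-- Upper bound: `c * Σ_{t=1}^N t^(c-1) ≤ N^c`. -/
private lemma sum_upper {c : ℝ} (hc0 : 0 < c) (hc1 : c ≤ 1) (N : ℕ) :
    c * ∑ t ∈ Finset.Icc 1 N, (t : ℝ) ^ (c - 1) ≤ (N : ℝ) ^ c := by
  induction N with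
  | zero => simp [Real.zero_rpow hc0.ne']
  | succ N ih =>
      rw [Finset.sum_Icc_succ_top (Nat.le_add_left 1 N)]
      have hb := bern_down hc0 hc1 (u := (N : ℝ) + 1)
        (le_add_of_nonneg_left (Nat.cast_nonneg N))
      have : ((N : ℝ) + 1) - 1 = (N : ℝ) := by ring
      rw [this] at hb
      push_cast
      nlinarith [hb, ih]

private lemma antitone_weights {c : ℝ} (hc1 : c ≤ 1) {a b : ℕ} (ha : 1 ≤ a) (hab : a ≤ b) :
    (b : ℝ) ^ (c - 1) ≤ (a : ℝ) ^ (c - 1) :=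
  Real.rpow_le_rpow_of_nonpos (by exact_mod_cast ha) (by exact_mod_cast hab)
    (by linarith)

/-- A set of positive integers of cardinality `N` has weight sum at most that of `{1,…,N}`. -/
private lemma sum_subset_le {c : ℝ} (hc1 : c ≤ 1) (A : Finset ℕ) (hA : ∀ a ∈ A, 1 ≤ a) :
    ∑ a ∈ A, (a : ℝ) ^ (c - 1) ≤ ∑ t ∈ Finset.Icc 1 A.card, (t : ℝ) ^ (c - 1) := by
  set n := A.card with hn
  set e := A.orderEmbOfFin hn.symm with he
  have hge' : ∀ k : ℕ, ∀ hk : k < n, k + 1 ≤ e ⟨k, hk⟩ := by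
    intro k
    induction k with
    | zero =>
        intro hk
        exact hA _ (Finset.orderEmbOfFin_mem A hn.symm ⟨0, hk⟩)
    | succ k ihk =>
        intro hk
        have hk' : k < n := by omega
        have h1 : (⟨k, hk'⟩ : Fin n) < ⟨k + 1, hk⟩ :=
          Fin.mk_lt_mk.mpr (Nat.lt_succ_self k)
        have h2 : e ⟨k, hk'⟩ < e ⟨k + 1, hk⟩ := e.strictMono h1
        have h3 := ihk hk'
        exact Nat.succ_le_of_lt (lt_of_le_of_lt h3 h2)
  have hge : ∀ i : Fin n, (i : ℕ) + 1 ≤ e i := fun i => hge' i.1 i.2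
  have h1 : ∑ a ∈ A, (a : ℝ) ^ (c - 1) = ∑ i : Fin n, ((e i : ℕ) : ℝ) ^ (c - 1) := by
    rw [← Finset.sum_attach A (fun a => (a : ℝ) ^ (c - 1))]
    exact Fintype.sum_equiv (A.orderIsoOfFin hn.symm).toEquiv.symm _ _
      (by intro x; simp [he, Finset.orderEmbOfFin])
  have h2 : ∑ i : Fin n, ((e i : ℕ) : ℝ) ^ (c - 1)
      ≤ ∑ i : Fin n, (((i : ℕ) + 1 : ℕ) : ℝ) ^ (c - 1) := by
    apply Finset.sum_le_sum
    intro i _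
    exact antitone_weights hc1 (Nat.le_add_left 1 i) (hge i)
  have h3 : ∑ i : Fin n, (((i : ℕ) + 1 : ℕ) : ℝ) ^ (c - 1)
      = ∑ t ∈ Finset.Icc 1 n, (t : ℝ) ^ (c - 1) := by
    rw [Fin.sum_univ_eq_sum_range (fun i => (((i + 1 : ℕ)) : ℝ) ^ (c - 1)) n]
    rw [show Finset.Icc 1 n = Finset.Ico 1 (n + 1) by rfl,
      Finset.sum_Ico_eq_sum_range]
    simp [add_comm]
  rw [h1, ← h3]; exact h2

/-- Weighted-sum lower bound with decreasing weights `w_t = t^(c-1)`: if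
`s : {1,…,T} → {0,1}` and `N = #{t ≤ T : s t = 0}`, then
`Σ_{t=1}^T s(t) t^(c-1) ≥ T^c - N T^(c-1) - 1/c`. -/
theorem weighted_power_sum_lower_bound
    (c : ℝ) (hc : c ∈ Set.Ioc (0 : ℝ) 1)
    (T : ℕ) (hT : 1 ≤ T)
    (s : ℕ → ℕ) (hs : ∀ t ∈ Finset.Icc 1 T, s t = 0 ∨ s t = 1) :
    (T : ℝ) ^ c
        - (((Finset.Icc 1 T).filter fun t => s t = 0).card : ℝ) * (T : ℝ) ^ (c - 1)
        - 1 / c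
      ≤ ∑ t ∈ Finset.Icc 1 T, (s t : ℝ) * (t : ℝ) ^ (c - 1) := by
  obtain ⟨hc0, hc1⟩ := hc
  set Z := (Finset.Icc 1 T).filter fun t => s t = 0 with hZ
  set N := Z.card with hN
  set w : ℕ → ℝ := fun t => (t : ℝ) ^ (c - 1) with hw
  have hT0 : (0 : ℝ) < (T : ℝ) := by exact_mod_cast hT
  -- Step 1: the sum equals total minus zero-set sum, at least
  have step1 : ∑ t ∈ Finset.Icc 1 T, w t - ∑ t ∈ Z, w t
      ≤ ∑ t ∈ Finset.Icc 1 T, (s t : ℝ) * w t := by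
    have hsub : Z ⊆ Finset.Icc 1 T := Finset.filter_subset _ _
    rw [← Finset.sum_sdiff hsub, add_sub_cancel_right]
    have : ∑ t ∈ Finset.Icc 1 T \ Z, w t ≤ ∑ t ∈ Finset.Icc 1 T \ Z, (s t : ℝ) * w t := by
      apply Finset.sum_le_sum
      intro t ht
      rw [Finset.mem_sdiff] at ht
      have h1 : s t = 1 := by
        rcases hs t ht.1 with h | h
        · exact absurd (by simp [hZ, Finset.mem_filter, ht.1, h]) ht.2
        · exact h
      simp [h1]
    refine this.trans (Finset.sum_le_sum_of_subset_of_nonneg Finset.sdiff_subset ?_)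
    intro t ht _
    have : (1:ℕ) ≤ t := (Finset.mem_Icc.mp ht).1
    positivity
  -- Step 2: total sum lower bound
  have step2 : ((T : ℝ) ^ c - 1) / c ≤ ∑ t ∈ Finset.Icc 1 T, w t := by
    have h := sum_lower hc0 hc1 T
    have h2 : (T : ℝ) ^ c ≤ ((T : ℝ) + 1) ^ c :=
      Real.rpow_le_rpow (by positivity) (by linarith) hc0.le
    rw [div_le_iff₀ hc0]
    nlinarith
  -- Step 3: zero-set sum upper bound
  have step3 : ∑ t ∈ Z, w t ≤ (N : ℝ) ^ c / c := by
    have h1 : ∑ t ∈ Z, w t ≤ ∑ t ∈ Finset.Icc 1 N, w t := by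
      refine sum_subset_le hc1 Z ?_
      intro a ha
      exact (Finset.mem_Icc.mp (Finset.mem_filter.mp ha).1).1
    have h2 : c * ∑ t ∈ Finset.Icc 1 N, w t ≤ (N : ℝ) ^ c := sum_upper hc0 hc1 N
    have h3 := mul_le_mul_of_nonneg_right h1 hc0.le
    rw [le_div_iff₀ hc0]
    linarith [h2, h3]
  -- Step 4: Bernoulli: N^c ≤ T^c + c*T^(c-1)*(N - T)
  have step4 : (N : ℝ) ^ c ≤ (T : ℝ) ^ c + c * (T : ℝ) ^ (c - 1) * ((N : ℝ) - T) := by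
    have hx : (-1 : ℝ) ≤ (N : ℝ) / T - 1 := by
      have : (0:ℝ) ≤ (N : ℝ) / T := by positivity
      linarith
    have hb : ((N : ℝ) / T) ^ c ≤ 1 + c * ((N : ℝ) / T - 1) := by
      have := rpow_one_add_le_one_add_mul_self hx hc0.le hc1
      rwa [add_sub_cancel] at this
    have hdiv : ((N : ℝ) / T) ^ c = (N : ℝ) ^ c / (T : ℝ) ^ c :=
      Real.div_rpow (by positivity) hT0.le c
    have hTc : (0 : ℝ) < (T : ℝ) ^ c := Real.rpow_pos_of_pos hT0 c
    have hkey : (N : ℝ) ^ c ≤ (T : ℝ) ^ c * (1 + c * ((N : ℝ) / T - 1)) := by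
      rw [hdiv] at hb
      calc (N : ℝ) ^ c = (T : ℝ) ^ c * ((N : ℝ) ^ c / (T : ℝ) ^ c) := by
            field_simp
        _ ≤ (T : ℝ) ^ c * (1 + c * ((N : ℝ) / T - 1)) :=
            mul_le_mul_of_nonneg_left hb hTc.le
    have hpow : (T : ℝ) ^ c / (T : ℝ) = (T : ℝ) ^ (c - 1) := by
      rw [Real.rpow_sub hT0, Real.rpow_one]
    calc (N : ℝ) ^ c ≤ (T : ℝ) ^ c * (1 + c * ((N : ℝ) / T - 1)) := hkey
      _ = (T : ℝ) ^ c + c * ((T : ℝ) ^ c / T) * ((N : ℝ) - T) := by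
          field_simp
      _ = (T : ℝ) ^ c + c * (T : ℝ) ^ (c - 1) * ((N : ℝ) - T) := by rw [hpow]
  -- Combine
  have hTT : (T : ℝ) ^ (c - 1) * (T : ℝ) = (T : ℝ) ^ c := by
    rw [Real.rpow_sub hT0, Real.rpow_one]; field_simp
  have step4' : (N : ℝ) ^ c
      ≤ (T : ℝ) ^ c + c * ((T : ℝ) ^ (c - 1) * N) - c * (T : ℝ) ^ c := by
    refine step4.trans_eq ?_
    rw [← hTT]; ring
  have final : (T : ℝ) ^ c - (N : ℝ) * (T : ℝ) ^ (c - 1)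
      ≤ ((T : ℝ) ^ c - (N : ℝ) ^ c) / c := by
    rw [le_div_iff₀ hc0]
    nlinarith [step4']
  calc (T : ℝ) ^ c - (N : ℝ) * (T : ℝ) ^ (c - 1) - 1 / c
      ≤ ((T : ℝ) ^ c - (N : ℝ) ^ c) / c - 1 / c := by linarith
    _ = ((T : ℝ) ^ c - 1) / c - (N : ℝ) ^ c / c := by ring
    _ ≤ ∑ t ∈ Finset.Icc 1 T, w t - ∑ t ∈ Z, w t := by
        have := step2; have := step3; linarith
    _ ≤ ∑ t ∈ Finset.Icc 1 T, (s t : ℝ) * w t := step1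
end

section
/- Let ℓ^t = w_t·ℓ̲ + (1 − w_t)·ℓ̄ be the boundary-design games and let a^1,…,a^T ∈ 𝒜 be any sequence of action profiles. Then for every player i, the best-in-hindsight regret with respect to the loss sequence ℓ^1,…,ℓ^T equals exactly R_i^T = (1 − 1/M)·ρ·Σ_{t=1}^T 1{a^t_i ≠ a†_i}·w_t; in particular the minimum over b ∈ 𝒜_i of Σ_{t=1}^T ℓ^t_i(b, a^t_{−i}) is attained at b = a†_i. -/
open Finset

/-- Under the boundary-design game sequence, the best-in-hindsight minimum is
attained at the target action, and player `i`'s best-in-hindsight regret equals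
`(1 - 1/M) ρ Σ_t 1{a_i^t ≠ a†_i} w_t`. -/
theorem boundary_design_regret_eq
    {M : ℕ} (hM : 2 ≤ M)
    {A : Fin M → Type} [∀ i, Fintype (A i)] [∀ i, Nonempty (A i)]
    [∀ i, DecidableEq (A i)]
    (L U : ℝ) (hLU : L < U)
    (adag : ∀ i, A i)
    (ρ : ℝ) (hρ0 : 0 < ρ) (hρU : ρ ≤ (U - L) / 2)
    (ℓo : (∀ i, A i) → Fin M → ℝ)
    (hℓo : ∀ i, ℓo adag i ∈ Set.Icc (L + ρ) (U - ρ))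
    (v : Fin M → ℝ) (hv : ∀ i, v i ∈ Set.Icc (L + ρ) (U - ρ))
    (ℓund : (∀ i, A i) → Fin M → ℝ)
    (hℓund : ∀ a i, ℓund a i =
      if a i = adag i
      then v i - (1 - ((univ.filter fun j => a j = adag j).card : ℝ) / M) * ρ
      else v i + (((univ.filter fun j => a j = adag j).card : ℝ) / M) * ρ)
    (c : ℝ) (hc : c ∈ Set.Ioc (0 : ℝ) 1)
    (ℓt : ℕ → (∀ i, A i) → Fin M → ℝ)
    (hℓt : ∀ (t : ℕ) (a : ∀ i, A i) (i : Fin M), ℓt t a i =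
      (t : ℝ) ^ (c - 1) * ℓund a i + (1 - (t : ℝ) ^ (c - 1)) * ℓo adag i)
    (T : ℕ) (hT : 1 ≤ T) (ap : ℕ → ∀ j, A j) (i : Fin M) :
    (∑ t ∈ Finset.Icc 1 T, ℓt t (Function.update (ap t) i (adag i)) i
        = univ.inf' univ_nonempty
            (fun b : A i => ∑ t ∈ Finset.Icc 1 T, ℓt t (Function.update (ap t) i b) i))
    ∧ (∑ t ∈ Finset.Icc 1 T, ℓt t (ap t) i)
        - univ.inf' univ_nonempty
            (fun b : A i => ∑ t ∈ Finset.Icc 1 T, ℓt t (Function.update (ap t) i b) i)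
      = (1 - 1 / (M : ℝ)) * ρ
          * ∑ t ∈ Finset.Icc 1 T,
              (if ap t i = adag i then (0 : ℝ) else (t : ℝ) ^ (c - 1)) := by
  have hM0 : (M : ℝ) ≠ 0 := Nat.cast_ne_zero.mpr (by omega)
  have hM2 : (2 : ℝ) ≤ (M : ℝ) := by exact_mod_cast hM
  have h1M : (0 : ℝ) ≤ 1 - 1 / (M : ℝ) := by
    rw [sub_nonneg, div_le_one (by linarith)]; linarith
  -- key pointwise lemma for ℓund
  have key : ∀ (a : ∀ j, A j) (b : A i),
      ℓund (Function.update a i b) i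
        = ℓund (Function.update a i (adag i)) i
          + (if b = adag i then 0 else (1 - 1 / (M : ℝ)) * ρ) := by
    intro a b
    by_cases hb : b = adag i
    · simp [hb]
    · have hset : (univ.filter fun j => Function.update a i (adag i) j = adag j)
          = insert i (univ.filter fun j => Function.update a i b j = adag j) := by
        ext j
        by_cases hj : j = i
        · subst hj; simp [hb]
        · simp [Function.update_of_ne hj, hj]
      have hnot : i ∉ (univ.filter fun j => Function.update a i b j = adag j) := by
        simp [hb]
      have hcard : ((univ.filter fun j => Function.update a i (adag i) j = adag j).card : ℝ)
          = ((univ.filter fun j => Function.update a i b j = adag j).card : ℝ) + 1 := by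
        rw [hset, Finset.card_insert_of_notMem hnot]; push_cast; ring
      rw [hℓund, hℓund]
      simp only [Function.update_self, if_neg hb, eq_self_iff_true, if_true]
      rw [hcard]
      field_simp
      ring
  have hkeyt : ∀ (t : ℕ) (a : ∀ j, A j) (b : A i),
      ℓt t (Function.update a i b) i
        = ℓt t (Function.update a i (adag i)) i
          + (if b = adag i then 0 else (t : ℝ) ^ (c - 1) * ((1 - 1 / (M : ℝ)) * ρ)) := by
    intro t a b
    rw [hℓt, hℓt, key a b]
    by_cases hb : b = adag i <;> simp [hb] <;> ring
  -- sum version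
  have hsum : ∀ b : A i,
      (∑ t ∈ Finset.Icc 1 T, ℓt t (Function.update (ap t) i b) i)
        = (∑ t ∈ Finset.Icc 1 T, ℓt t (Function.update (ap t) i (adag i)) i)
          + (if b = adag i then 0
             else (∑ t ∈ Finset.Icc 1 T, (t : ℝ) ^ (c - 1)) * ((1 - 1 / (M : ℝ)) * ρ)) := by
    intro b
    by_cases hb : b = adag i
    · simp [hb]
    · rw [Finset.sum_congr rfl (fun t _ => hkeyt t (ap t) b)]
      rw [Finset.sum_add_distrib]
      simp [hb, Finset.sum_mul]
  have hwnn : (0 : ℝ) ≤ ∑ t ∈ Finset.Icc 1 T, (t : ℝ) ^ (c - 1) :=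
    Finset.sum_nonneg fun t _ => Real.rpow_nonneg (Nat.cast_nonneg t) _
  have hinf : univ.inf' univ_nonempty
        (fun b : A i => ∑ t ∈ Finset.Icc 1 T, ℓt t (Function.update (ap t) i b) i)
      = ∑ t ∈ Finset.Icc 1 T, ℓt t (Function.update (ap t) i (adag i)) i := by
    apply le_antisymm
    · exact Finset.inf'_le _ (Finset.mem_univ _)
    · apply Finset.le_inf'
      intro b _
      rw [hsum b]
      by_cases hb : b = adag i
      · simp [hb]
      · rw [if_neg hb]
        have : (0 : ℝ) ≤ (∑ t ∈ Finset.Icc 1 T, (t : ℝ) ^ (c - 1)) * ((1 - 1 / (M : ℝ)) * ρ) :=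
          mul_nonneg hwnn (mul_nonneg h1M hρ0.le)
        linarith
  refine ⟨hinf.symm, ?_⟩
  rw [hinf]
  have hrep : ∑ t ∈ Finset.Icc 1 T, ℓt t (ap t) i
      = ∑ t ∈ Finset.Icc 1 T,
          (ℓt t (Function.update (ap t) i (adag i)) i
            + (if ap t i = adag i then 0
               else (t : ℝ) ^ (c - 1) * ((1 - 1 / (M : ℝ)) * ρ))) := by
    refine Finset.sum_congr rfl fun t _ => ?_
    rw [← hkeyt t (ap t) (ap t i), Function.update_eq_self]
  rw [hrep, Finset.sum_add_distrib, add_sub_cancel_left, Finset.mul_sum]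
  refine Finset.sum_congr rfl fun t _ => ?_
  by_cases h : ap t i = adag i <;> simp [h] <;> ring
end

section
/- (Theorem 2, cost bound.) Let ℓ^t = w_t·ℓ̲ + (1 − w_t)·ℓ̄ be the boundary-design games, assume additionally that ℓ_i^o(a) ∈ [L, U] for every i and every a ∈ 𝒜, and let a^1,…,a^T : Ω → 𝒜 be random action profiles on a probability space (Ω, ℱ, ℙ). Let η > 0, p ≥ 1 be reals and let the per-round design costs c_1,…,c_T be random variables satisfying 0 ≤ c_t ≤ η·‖ℓ^o(a^t) − ℓ^t(a^t)‖_p for each t, where ‖x‖_p = (Σ_{i=1}^M |x_i|^p)^{1/p}. Then the expected cumulative design cost satisfies E[Σ_{t=1}^T c_t] ≤ η·(U−L)·M^{1/p}·(T − E[N^T]) + η·(U−L)·M^{1/p}·(T^c)/c, where N^T = #{t ≤ T : a^t = a†}. -/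
open Finset MeasureTheory

/-! At a played profile `a`, the round-`t` game is the convex combination
`w_t ℓ̲ + (1 - w_t) ℓ^o(a†)` of losses in `[L, U]`, so each coordinate of `ℓ^o(a) - ℓ^t(a)` is
at most `U - L` for moving from `a†` to `a` (nothing if `a = a†`) plus `w_t (U - L)`, and the
`p`-norm costs a factor `M^{1/p}`. Over the rounds the first part adds up to `T - N^T` and the
second to `(U - L) ∑_{t ≤ T} t^{c-1} ≤ (U - L) T^c / c` by concavity of `x ↦ x^c`. The bound
holds pointwise on `Ω`, and taking expectations gives the claim. -/

lemma Real.mul_add_one_rpow_sub_one_le {c x : ℝ} (hc0 : 0 ≤ c) (hc1 : c ≤ 1) (hx : 0 ≤ x) :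
    c * (x + 1) ^ (c - 1) ≤ (x + 1) ^ c - x ^ c := by
  have hx1 : 0 < x + 1 := by linarith
  -- Bernoulli at `s = -1 / (x + 1)`, i.e. `1 + s = x / (x + 1)`.
  have hbern : (x / (x + 1)) ^ c ≤ 1 - c / (x + 1) := by
    have := rpow_one_add_le_one_add_mul_self
      (by rw [neg_div, neg_le_neg_iff, div_le_one hx1]; linarith : -1 ≤ -1 / (x + 1)) hc0 hc1
    convert this using 2 <;> field_simp <;> ring
  have hx_rpow : x ^ c = (x / (x + 1)) ^ c * (x + 1) ^ c := by
    rw [← Real.mul_rpow (div_nonneg hx hx1.le) hx1.le, div_mul_cancel₀ _ hx1.ne']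
  calc c * (x + 1) ^ (c - 1) = (x + 1) ^ c - (1 - c / (x + 1)) * (x + 1) ^ c := by
        rw [Real.rpow_sub hx1, Real.rpow_one]; ring
    _ ≤ (x + 1) ^ c - x ^ c := by rw [hx_rpow]; gcongr

lemma Real.sum_Icc_rpow_sub_one_le {c : ℝ} (hc0 : 0 < c) (hc1 : c ≤ 1) (T : ℕ) :
    ∑ t ∈ Icc 1 T, (t : ℝ) ^ (c - 1) ≤ (T : ℝ) ^ c / c := by
  induction T with
  | zero => simp [Real.zero_rpow hc0.ne']
  | succ n ih =>
    rw [sum_Icc_succ_top (by omega)]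
    have hstep := Real.mul_add_one_rpow_sub_one_le hc0.le hc1 n.cast_nonneg
    push_cast
    rw [le_div_iff₀ hc0] at ih ⊢
    linarith [add_mul (∑ t ∈ Icc 1 n, (t : ℝ) ^ (c - 1)) (((n : ℝ) + 1) ^ (c - 1)) c]

lemma rpow_sum_abs_rpow_le_of_abs_le {ι : Type*} [Fintype ι] {x : ι → ℝ} {B p : ℝ}
    (hp : 0 < p) (hB : 0 ≤ B) (hx : ∀ i, |x i| ≤ B) :
    (∑ i, |x i| ^ p) ^ (1 / p) ≤ (Fintype.card ι : ℝ) ^ (1 / p) * B := by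
  calc (∑ i, |x i| ^ p) ^ (1 / p) ≤ (∑ _i : ι, B ^ p) ^ (1 / p) := by
        gcongr with i
        exact hx i
    _ = (Fintype.card ι : ℝ) ^ (1 / p) * B := by
        rw [sum_const, card_univ, nsmul_eq_mul, Real.mul_rpow (by positivity) (by positivity),
          ← Real.rpow_mul hB, mul_one_div_cancel hp.ne', Real.rpow_one]

lemma ite_mem_Icc_of_mem_Icc {L U ρ v θ : ℝ} (hρ : 0 ≤ ρ) (hv : v ∈ Set.Icc (L + ρ) (U - ρ))
    (hθ0 : 0 ≤ θ) (hθ1 : θ ≤ 1) (P : Prop) [Decidable P] :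
    (if P then v - (1 - θ) * ρ else v + θ * ρ) ∈ Set.Icc L U := by
  obtain ⟨hvL, hvU⟩ := hv
  split <;> constructor <;> nlinarith

lemma abs_sub_convexCombination_le {α : Type*} [DecidableEq α] {L U w : ℝ} {f g : α → ℝ}
    (hf : ∀ a, f a ∈ Set.Icc L U) (hg : ∀ a, g a ∈ Set.Icc L U) (hw : 0 ≤ w) (a₀ a : α) :
    |f a - (w * g a + (1 - w) * f a₀)| ≤ ((1 - if a = a₀ then 1 else 0) + w) * (U - L) := by
  have hdist : ∀ {x y}, x ∈ Set.Icc L U → y ∈ Set.Icc L U → |x - y| ≤ U - L := fun hx hy => by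
    simpa [Real.dist_eq] using Real.dist_le_of_mem_Icc hx hy
  have hjump : |f a - f a₀| ≤ (1 - if a = a₀ then 1 else 0) * (U - L) := by
    split_ifs with h
    · simp [h]
    · simpa using hdist (hf a) (hf a₀)
  calc |f a - (w * g a + (1 - w) * f a₀)| = |(f a - f a₀) + w * (f a₀ - g a)| := by ring_nf
    _ ≤ |f a - f a₀| + w * (U - L) := by
        grw [abs_add_le, abs_mul, abs_of_nonneg hw, hdist (hf a₀) (hg a)]
    _ ≤ _ := by linarith

lemma rpow_sum_abs_sub_convexCombination_le {ι α : Type*} [Fintype ι] [DecidableEq α]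
    {L U w p : ℝ} (hLU : L ≤ U) (hp : 0 < p) (hw : 0 ≤ w) {f g : α → ι → ℝ}
    (hf : ∀ a i, f a i ∈ Set.Icc L U) (hg : ∀ a i, g a i ∈ Set.Icc L U) (a₀ a : α) :
    (∑ i, |f a i - (w * g a i + (1 - w) * f a₀ i)| ^ p) ^ (1 / p) ≤
      (Fintype.card ι : ℝ) ^ (1 / p) * (((1 - if a = a₀ then 1 else 0) + w) * (U - L)) :=
  rpow_sum_abs_rpow_le_of_abs_le hp
    (mul_nonneg (add_nonneg (by split_ifs <;> norm_num) hw) (sub_nonneg.2 hLU))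
    fun i => abs_sub_convexCombination_le (fun a => hf a i) (fun a => hg a i) hw a₀ a

lemma integrable_card_filter_eq {Ω α : Type*} [MeasurableSpace Ω] [MeasurableSpace α]
    [MeasurableSingletonClass α] [DecidableEq α] (P : Measure Ω) [IsFiniteMeasure P]
    {X : ℕ → Ω → α} (hX : ∀ t, Measurable (X t)) (s : Finset ℕ) (x : α) :
    Integrable (fun ω => (#{t ∈ s | X t ω = x} : ℝ)) P := by
  simp_rw [natCast_card_filter]
  refine integrable_finsetSum _ fun t _ => ?_
  exact (integrable_const 1).indicator ((hX t) (measurableSet_singleton x)) |>.congr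
    (Filter.Eventually.of_forall fun ω => by by_cases h : X t ω = x <;> simp [h])

lemma integral_le_of_le_mul_sub {Ω : Type*} [MeasurableSpace Ω] {P : Measure Ω}
    [IsProbabilityMeasure P] {X N : Ω → ℝ} {K C D : ℝ} (hN : Integrable N P)
    (hX0 : ∀ ω, 0 ≤ X ω) (hX : ∀ ω, X ω ≤ K * (C - N ω) + D) :
    ∫ ω, X ω ∂P ≤ K * (C - ∫ ω, N ω ∂P) + D := by
  have hlin : Integrable (fun ω => K * (C - N ω)) P := ((integrable_const C).sub hN).const_mul K
  have hint : Integrable (fun ω => K * (C - N ω) + D) P := hlin.add (integrable_const D)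
  calc ∫ ω, X ω ∂P ≤ ∫ ω, K * (C - N ω) + D ∂P :=
        integral_mono_of_nonneg (.of_forall hX0) hint (.of_forall hX)
    _ = K * (C - ∫ ω, N ω ∂P) + D := by
        rw [integral_add hlin (integrable_const D), integral_const_mul,
          integral_sub (integrable_const C) hN]
        simp

theorem boundary_design_cost_bound_general
    {M : ℕ}
    {A : Fin M → Type}
    [∀ i, DecidableEq (A i)]
    (L U : ℝ) (hLU : L < U)
    (adag : ∀ i, A i)
    (ρ : ℝ) (hρ0 : 0 < ρ)
    (ℓo : (∀ i, A i) → Fin M → ℝ)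
    (v : Fin M → ℝ) (hv : ∀ i, v i ∈ Set.Icc (L + ρ) (U - ρ))
    (ℓund : (∀ i, A i) → Fin M → ℝ)
    (hℓund : ∀ a i, ℓund a i =
      if a i = adag i
      then v i - (1 - ((univ.filter fun j => a j = adag j).card : ℝ) / M) * ρ
      else v i + (((univ.filter fun j => a j = adag j).card : ℝ) / M) * ρ)
    (c : ℝ) (hc : c ∈ Set.Ioc (0 : ℝ) 1)
    (ℓt : ℕ → (∀ i, A i) → Fin M → ℝ)
    (hℓt : ∀ (t : ℕ) (a : ∀ i, A i) (i : Fin M), ℓt t a i =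
      (t : ℝ) ^ (c - 1) * ℓund a i + (1 - (t : ℝ) ^ (c - 1)) * ℓo adag i)
    (hrange : ∀ (i : Fin M) (a : ∀ j, A j), ℓo a i ∈ Set.Icc L U)
    {Ω : Type} [MeasurableSpace Ω] (P : Measure Ω) [IsProbabilityMeasure P]
    [∀ i, MeasurableSpace (A i)] [∀ i, MeasurableSingletonClass (A i)]
    (T : ℕ) (ap : ℕ → Ω → ∀ j, A j)
    (hmeas : ∀ t, Measurable (ap t))
    (η p : ℝ) (hη : 0 < η) (hp : 1 ≤ p)
    (cst : ℕ → Ω → ℝ)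
    (hcst : ∀ t ∈ Finset.Icc 1 T, ∀ ω, 0 ≤ cst t ω ∧
      cst t ω ≤ η * (∑ i, |ℓo (ap t ω) i - ℓt t (ap t ω) i| ^ p) ^ (1 / p)) :
    ∫ ω, ∑ t ∈ Finset.Icc 1 T, cst t ω ∂P
      ≤ η * (U - L) * (M : ℝ) ^ (1 / p)
          * ((T : ℝ)
              - ∫ ω, (((Finset.Icc 1 T).filter fun t => ap t ω = adag).card : ℝ) ∂P)
        + η * (U - L) * (M : ℝ) ^ (1 / p) * (T : ℝ) ^ c / c := by
  obtain ⟨hc0, hc1⟩ := hc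
  set K := η * (U - L) * (M : ℝ) ^ (1 / p)
  have hK : 0 ≤ K := mul_nonneg (mul_nonneg hη.le (sub_nonneg.2 hLU.le)) (by positivity)
  have hsource : ∀ a i, ℓund a i ∈ Set.Icc L U := fun a i => by
    rw [hℓund]
    exact ite_mem_Icc_of_mem_Icc hρ0.le (hv i) (by positivity)
      (div_le_one_of_le₀ (by exact_mod_cast card_le_univ _ |>.trans_eq (Fintype.card_fin M))
        M.cast_nonneg) _
  have hround : ∀ t ∈ Icc 1 T, ∀ ω, cst t ω ≤
      K * (1 - if ap t ω = adag then 1 else 0) + K * (t : ℝ) ^ (c - 1) := by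
    intro t ht ω
    have hnorm := rpow_sum_abs_sub_convexCombination_le hLU.le (by linarith : (0 : ℝ) < p)
      (by positivity : 0 ≤ (t : ℝ) ^ (c - 1)) (fun a i => hrange i a) hsource adag (ap t ω)
    simp only [← hℓt, Fintype.card_fin] at hnorm
    calc cst t ω ≤ η * _ := (hcst t ht ω).2
      _ ≤ _ := mul_le_mul_of_nonneg_left hnorm hη.le
      _ = _ := by ring
  have hpointwise : ∀ ω, ∑ t ∈ Icc 1 T, cst t ω ≤
      K * (T - #{t ∈ Icc 1 T | ap t ω = adag}) + K * (T : ℝ) ^ c / c := fun ω =>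
    calc ∑ t ∈ Icc 1 T, cst t ω
        ≤ ∑ t ∈ Icc 1 T, (K * (1 - if ap t ω = adag then 1 else 0) + K * (t : ℝ) ^ (c - 1)) :=
          sum_le_sum fun t ht => hround t ht ω
      _ = K * (T - #{t ∈ Icc 1 T | ap t ω = adag}) + K * ∑ t ∈ Icc 1 T, (t : ℝ) ^ (c - 1) := by
          rw [sum_add_distrib, ← mul_sum, ← mul_sum, sum_sub_distrib]; simp
      _ ≤ _ := by grw [Real.sum_Icc_rpow_sub_one_le hc0 hc1, mul_div_assoc]
  exact integral_le_of_le_mul_sub (integrable_card_filter_eq P hmeas _ adag)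
    (fun ω => sum_nonneg fun t ht => (hcst t ht ω).1) hpointwise

/-- Theorem 2, cost bound: under the boundary-design games, if the per-round design
cost is at most `η` times the `p`-norm of the loss deviation at the played
profile, then the expected cumulative design cost is at most
`η (U-L) M^(1/p) (T - E[N^T]) + η (U-L) M^(1/p) T^c / c`. -/
theorem boundary_design_cost_bound
    {M : ℕ} (hM : 2 ≤ M)
    {A : Fin M → Type} [∀ i, Fintype (A i)] [∀ i, Nonempty (A i)]
    [∀ i, DecidableEq (A i)]
    (L U : ℝ) (hLU : L < U)
    (adag : ∀ i, A i)
    (ρ : ℝ) (hρ0 : 0 < ρ) (hρU : ρ ≤ (U - L) / 2)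
    (ℓo : (∀ i, A i) → Fin M → ℝ)
    (hℓo : ∀ i, ℓo adag i ∈ Set.Icc (L + ρ) (U - ρ))
    (v : Fin M → ℝ) (hv : ∀ i, v i ∈ Set.Icc (L + ρ) (U - ρ))
    (ℓund : (∀ i, A i) → Fin M → ℝ)
    (hℓund : ∀ a i, ℓund a i =
      if a i = adag i
      then v i - (1 - ((univ.filter fun j => a j = adag j).card : ℝ) / M) * ρ
      else v i + (((univ.filter fun j => a j = adag j).card : ℝ) / M) * ρ)
    (c : ℝ) (hc : c ∈ Set.Ioc (0 : ℝ) 1)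
    (ℓt : ℕ → (∀ i, A i) → Fin M → ℝ)
    (hℓt : ∀ (t : ℕ) (a : ∀ i, A i) (i : Fin M), ℓt t a i =
      (t : ℝ) ^ (c - 1) * ℓund a i + (1 - (t : ℝ) ^ (c - 1)) * ℓo adag i)
    (hrange : ∀ (i : Fin M) (a : ∀ j, A j), ℓo a i ∈ Set.Icc L U)
    {Ω : Type} [MeasurableSpace Ω] (P : Measure Ω) [IsProbabilityMeasure P]
    [∀ i, MeasurableSpace (A i)] [∀ i, MeasurableSingletonClass (A i)]
    (T : ℕ) (hT : 1 ≤ T) (ap : ℕ → Ω → ∀ j, A j)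
    (hmeas : ∀ t, Measurable (ap t))
    (η p : ℝ) (hη : 0 < η) (hp : 1 ≤ p)
    (cst : ℕ → Ω → ℝ)
    (hcst : ∀ t ∈ Finset.Icc 1 T, ∀ ω, 0 ≤ cst t ω ∧
      cst t ω ≤ η * (∑ i, |ℓo (ap t ω) i - ℓt t (ap t ω) i| ^ p) ^ (1 / p)) :
    ∫ ω, ∑ t ∈ Finset.Icc 1 T, cst t ω ∂P
      ≤ η * (U - L) * (M : ℝ) ^ (1 / p)
          * ((T : ℝ)
              - ∫ ω, (((Finset.Icc 1 T).filter fun t => ap t ω = adag).card : ℝ) ∂P)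
        + η * (U - L) * (M : ℝ) ^ (1 / p) * (T : ℝ) ^ c / c :=
  boundary_design_cost_bound_general L U hLU adag ρ hρ0 ℓo v hv ℓund hℓund c hc ℓt hℓt hrange P T ap
    hmeas η p hη hp cst hcst
end

section
/- Let ℓ^thr be the thresholded interior-design game. Then for every player i, the target action a†_i strictly dominates every other action by at least (1 − 1/M)·ρ: for every a_i ∈ 𝒜_i with a_i ≠ a†_i and every choice a_{−i} of actions for the other players, ℓ^thr_i(a_i, a_{−i}) ≥ ℓ^thr_i(a†_i, a_{−i}) + (1 − 1/M)·ρ. -/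
open Finset

/-- In the thresholded interior-design game, the target action `adag i` strictly
dominates every other action by at least `(1 - 1/M) * ρ`. -/
theorem thresholded_design_dominance
    {M : ℕ} (hM : 2 ≤ M)
    {A : Fin M → Type} [∀ i, Fintype (A i)] [∀ i, Nonempty (A i)]
    [∀ i, DecidableEq (A i)]
    (L U : ℝ) (hLU : L < U)
    (adag : ∀ i, A i)
    (ρ : ℝ) (hρ0 : 0 < ρ) (hρU : ρ ≤ (U - L) / 2)
    (ℓo : (∀ i, A i) → Fin M → ℝ)
    (hℓo : ∀ i, ℓo adag i ∈ Set.Icc (L + ρ) (U - ρ))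
    (ℓthr : (∀ i, A i) → Fin M → ℝ)
    (hℓthr : ∀ a i, ℓthr a i =
      if a i = adag i
      then min (ℓo adag i - (1 - ((univ.filter fun j => a j = adag j).card : ℝ) / M) * ρ)
               (ℓo a i)
      else max (ℓo adag i + (((univ.filter fun j => a j = adag j).card : ℝ) / M) * ρ)
               (ℓo a i)) :
    ∀ (i : Fin M) (ai : A i), ai ≠ adag i → ∀ a : ∀ j, A j,
      ℓthr (Function.update a i (adag i)) i + (1 - 1 / (M : ℝ)) * ρ
        ≤ ℓthr (Function.update a i ai) i := by
  intro i ai hai a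
  have hM0 : (0:ℝ) < M := by positivity
  set a1 := Function.update a i (adag i) with ha1
  set a2 := Function.update a i ai with ha2
  have h1i : a1 i = adag i := Function.update_self _ _ _
  have h2i : a2 i = ai := Function.update_self _ _ _
  have h2i' : ¬ a2 i = adag i := by rw [h2i]; exact hai
  have hnot : i ∉ univ.filter fun j => a2 j = adag j := by
    simp [h2i', Finset.mem_filter]
  have h1 : (univ.filter fun j => a1 j = adag j)
      = insert i (univ.filter fun j => a2 j = adag j) := by
    ext j
    by_cases hj : j = i
    · subst hj; simp [h1i, h2i']
    · simp [ha1, ha2, Function.update_of_ne hj, hj]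
  have hcard : (((univ.filter fun j => a1 j = adag j).card : ℕ) : ℝ)
      = ((univ.filter fun j => a2 j = adag j).card : ℝ) + 1 := by
    rw [h1, card_insert_of_notMem hnot]; push_cast; ring
  rw [hℓthr a1 i, hℓthr a2 i, if_pos h1i, if_neg h2i']
  have key : ℓo adag i - (1 - ((univ.filter fun j => a1 j = adag j).card : ℝ) / M) * ρ
        + (1 - 1 / (M : ℝ)) * ρ
      = ℓo adag i + (((univ.filter fun j => a2 j = adag j).card : ℝ) / M) * ρ := by
    rw [hcard]; field_simp; ring
  calc min (ℓo adag i - (1 - ((univ.filter fun j => a1 j = adag j).card : ℝ) / M) * ρ)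
          (ℓo a1 i) + (1 - 1 / (M : ℝ)) * ρ
      ≤ ℓo adag i - (1 - ((univ.filter fun j => a1 j = adag j).card : ℝ) / M) * ρ
          + (1 - 1 / (M : ℝ)) * ρ := by
        gcongr; exact min_le_left _ _
    _ = ℓo adag i + (((univ.filter fun j => a2 j = adag j).card : ℝ) / M) * ρ := key
    _ ≤ max (ℓo adag i + (((univ.filter fun j => a2 j = adag j).card : ℝ) / M) * ρ)
          (ℓo a2 i) := le_max_left _ _
end
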